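/- arXiv:2501.15807 — 3 statements merged into one kernel-verified Lean document; each statement's English description precedes it below -/
import Mathlib

section
/- Any three-round classical communication protocol (Alice→Bob, Bob→Alice, Alice→Bob) with finite messages, shared randomness x, Alice's coins q(m₁|ψ,x) and r(m₃|m₁,m₂,ψ,x), Bob's instrument {M^{m₂}_{m₁,x}} and final POVM {π^b_{m₁,m₂,m₃,x}}, produces output distribution p(b|ψ,φ) = Σ_{m₁,m₂,m₃,x} μ(x) q(m₁|ψ,x) r(m₃|ψ,x,m₁,m₂) Tr[π^b_{m₁,m₂,m₃,x} M^{m₂}_{m₁,x} φ M^{m₂†}_{m₁,x}], and this distribution can be exactly reproduced by a one-round protocol in which Alice samples m₁ and, for every possible value i of m₂, samples η_i ~ r(·|ψ,x,m₁,m₂=i), sends (m₁, η₁,…,η_k) to Bob, and Bob sets m₃ = η_{m₂}. -/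
open Matrix ComplexOrder
noncomputable section

/-- Proposition 1 for three rounds: the output distribution of any
three-round classical protocol (Alice→Bob, Bob→Alice, Alice→Bob), namely
  p(b|ψ,φ) = Σ_{m₁,m₂,m₃,x} μ(x) q(m₁|ψ,x) r(m₃|ψ,x,m₁,m₂)
               Tr[π^b_{m₁m₂m₃x} M^{m₂}_{m₁x} φ M^{m₂†}_{m₁x}],
is exactly reproduced by the one-round protocol in which Alice samples m₁ and, for each
possible value i of m₂, samples η_i ~ r(·|ψ,x,m₁,i), sends (m₁,η), and Bob (obtaining
m₂ from his instrument) sets m₃ = η_{m₂}. -/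
theorem three_round_to_one_round
    {Ψ : Type*} {X M₁ M₂ M₃ B : Type*}
    [Fintype X] [Fintype M₁] [Fintype M₂] [DecidableEq M₂] [Fintype M₃] [Fintype B]
    {n : Type*} [Fintype n] [DecidableEq n]
    (μ : X → ℝ) (hμ0 : ∀ x, 0 ≤ μ x) (hμ1 : ∑ x, μ x = 1)
    (q : M₁ → Ψ → X → ℝ) (hq0 : ∀ m₁ ψ x, 0 ≤ q m₁ ψ x) (hq1 : ∀ ψ x, ∑ m₁, q m₁ ψ x = 1)
    (r : M₃ → M₁ → M₂ → Ψ → X → ℝ) (hr0 : ∀ m₃ m₁ m₂ ψ x, 0 ≤ r m₃ m₁ m₂ ψ x)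
    (hr1 : ∀ m₁ m₂ ψ x, ∑ m₃, r m₃ m₁ m₂ ψ x = 1)
    (M : M₁ → X → M₂ → Matrix n n ℂ)
    (hM : ∀ m₁ x, ∑ m₂, (M m₁ x m₂)ᴴ * M m₁ x m₂ = 1)
    (π : M₁ → M₂ → M₃ → X → B → Matrix n n ℂ)
    (hπpos : ∀ m₁ m₂ m₃ x b, (π m₁ m₂ m₃ x b).PosSemidef)
    (hπ1 : ∀ m₁ m₂ m₃ x, ∑ b, π m₁ m₂ m₃ x b = 1)
    (φ : Matrix n n ℂ) (hφ : φ.PosSemidef) (hφtr : φ.trace = 1)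
    (ψ : Ψ) (b : B) :
    -- three-round output distribution
    (∑ x, ∑ m₁, ∑ m₂, ∑ m₃,
        (μ x * q m₁ ψ x * r m₃ m₁ m₂ ψ x : ℂ) *
          Matrix.trace (π m₁ m₂ m₃ x b * (M m₁ x m₂ * φ * (M m₁ x m₂)ᴴ)))
    =
    -- one-round simulation: Alice sends m₁ together with η : M₂ → M₃, Bob uses m₃ = η m₂
    (∑ x, ∑ m₁, ∑ η : M₂ → M₃,
        (μ x * q m₁ ψ x * ∏ i, r (η i) m₁ i ψ x : ℂ) *
          ∑ m₂, Matrix.trace (π m₁ m₂ (η m₂) x b * (M m₁ x m₂ * φ * (M m₁ x m₂)ᴴ))) := by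

  have aux : ∀ (g : M₂ → M₃ → ℂ), (∀ i, ∑ j, g i j = 1) → ∀ (m₂ : M₂) (T : M₃ → ℂ),
      (∑ η : M₂ → M₃, (∏ i, g i (η i)) * T (η m₂)) = ∑ m₃, g m₂ m₃ * T m₃ := by
    intro g hg m₂ T
    have h1 : ∀ η : M₂ → M₃, (∏ i, g i (η i)) * T (η m₂)
        = ∏ i, (g i (η i) * if i = m₂ then T (η i) else 1) := by
      intro η
      rw [Finset.prod_mul_distrib, Finset.prod_ite_eq' Finset.univ m₂ (fun i => T (η i))]
      simp
    classical
    simp_rw [h1]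
    have h2 := Finset.prod_univ_sum (fun _ : M₂ => (Finset.univ : Finset M₃))
      (fun i j => g i j * if i = m₂ then T j else 1)
    rw [Fintype.piFinset_univ] at h2
    rw [← h2]
    rw [Finset.prod_eq_single m₂]
    · simp
    · intro i _ hi
      simp only [if_neg hi, mul_one]
      exact hg i
    · intro h; exact absurd (Finset.mem_univ m₂) h
  refine Finset.sum_congr rfl fun x _ => Finset.sum_congr rfl fun m₁ _ => ?_
  have key := aux (fun i j => ((r j m₁ i ψ x : ℝ) : ℂ))
    (by intro i; rw [← Complex.ofReal_sum]; exact_mod_cast congrArg Complex.ofReal (hr1 m₁ i ψ x))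
  push_cast
  simp only [Finset.mul_sum]
  conv_rhs => rw [Finset.sum_comm]
  refine Finset.sum_congr rfl fun m₂ _ => ?_
  have : ∀ η : M₂ → M₃,
      (μ x : ℂ) * (q m₁ ψ x : ℂ) * (∏ i, (r (η i) m₁ i ψ x : ℂ)) *
        Matrix.trace (π m₁ m₂ (η m₂) x b * (M m₁ x m₂ * φ * (M m₁ x m₂)ᴴ))
      = ((μ x : ℂ) * (q m₁ ψ x : ℂ)) * ((∏ i, (r (η i) m₁ i ψ x : ℂ)) *
        Matrix.trace (π m₁ m₂ (η m₂) x b * (M m₁ x m₂ * φ * (M m₁ x m₂)ᴴ))) := by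
    intro η; ring
  simp_rw [this, ← Finset.mul_sum,
    key m₂ (fun m₃ => Matrix.trace (π m₁ m₂ m₃ x b * (M m₁ x m₂ * φ * (M m₁ x m₂)ᴴ)))]
  rw [Finset.mul_sum]
  exact Finset.sum_congr rfl fun m₃ _ => by ring
end
end

section
/- Let M_{R1} = {s_a P_a}_{a=1}^k be a finite-outcome POVM on a finite-dimensional Hilbert space where each P_a is a rank-1 projector and s_a ≥ 0. Then M_{R1} can be written as a finite convex combination M_{R1} = Σ_{λ=1}^L μ_λ M^λ with L finite, μ_λ > 0, Σ μ_λ = 1, where each M^λ = {s_a^λ P_a}_{a=1}^k is an extremal rank-1 POVM (i.e., its nonzero elements {s_a^λ P_a : s_a^λ > 0} are linearly independent and Σ_a s_a^λ P_a = I). -/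
open Matrix
noncomputable section

private lemma trace_rankOne_proj {n : Type*} [Fintype n] [DecidableEq n] (u : n → ℂ)
    (h : star u ⬝ᵥ u = 1) : trace (vecMulVec u (star u)) = 1 := by
  rw [trace]
  simp only [diag_apply, vecMulVec_apply, Pi.star_apply]
  rw [← h, dotProduct]
  exact Finset.sum_congr rfl fun i _ => mul_comm _ _

private lemma mixed_smul {n : Type*} [Fintype n] (dd ss : ℝ) (M : Matrix n n ℂ) :
    dd • ((ss : ℂ) • M) = ((dd * ss : ℝ) : ℂ) • M := by
  rw [← Complex.coe_smul, smul_smul]; push_cast; ring_nf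

/-- Lemma 2: any finite-outcome rank-1 POVM {s_a P_a} can be written as a
finite convex combination of extremal rank-1 POVMs {s_a^λ P_a} with the same projectors,
where extremality means the nonzero elements are linearly independent (over ℝ). -/
theorem rankOne_POVM_decomposition
    {n : Type*} [Fintype n] [DecidableEq n] {k : ℕ}
    (s : Fin k → ℝ) (hs : ∀ a, 0 ≤ s a)
    (P : Fin k → Matrix n n ℂ)
    (hP : ∀ a, ∃ u : n → ℂ, star u ⬝ᵥ u = 1 ∧ P a = vecMulVec u (star u))
    (hPOVM : ∑ a, (s a : ℂ) • P a = 1) :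
    ∃ (L : ℕ) (μ : Fin L → ℝ) (t : Fin L → Fin k → ℝ),
      (∀ l, 0 < μ l) ∧ (∑ l, μ l = 1) ∧
      (∀ l a, 0 ≤ t l a) ∧
      (∀ l, ∑ a, (t l a : ℂ) • P a = 1) ∧
      (∀ l, LinearIndependent ℝ
        (fun a : {a : Fin k // 0 < t l a} => (t l a.1 : ℂ) • P a.1)) ∧
      (∀ a, s a = ∑ l, μ l * t l a) := by
  classical
  have htrP : ∀ a, trace (P a) = 1 := by
    intro a
    obtain ⟨u, hu, hPa⟩ := hP a
    rw [hPa]; exact trace_rankOne_proj u hu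
  suffices H : ∀ N : ℕ, ∀ s : Fin k → ℝ,
      (Finset.univ.filter fun a => 0 < s a).card ≤ N →
      (∀ a, 0 ≤ s a) → (∑ a, (s a : ℂ) • P a = 1) →
      ∃ (L : ℕ) (μ : Fin L → ℝ) (t : Fin L → Fin k → ℝ),
        (∀ l, 0 < μ l) ∧ (∑ l, μ l = 1) ∧
        (∀ l a, 0 ≤ t l a) ∧
        (∀ l, ∑ a, (t l a : ℂ) • P a = 1) ∧
        (∀ l, LinearIndependent ℝ
          (fun a : {a : Fin k // 0 < t l a} => (t l a.1 : ℂ) • P a.1)) ∧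
        (∀ a, s a = ∑ l, μ l * t l a) by
    exact H _ s le_rfl hs hPOVM
  intro N
  induction N with
  | zero =>
    intro s hcard hs0 hPOVM0
    have hz : ∀ a, ¬ 0 < s a := by
      intro a ha
      have hmem : a ∈ Finset.univ.filter (fun a => 0 < s a) := by simp [ha]
      have := Finset.card_pos.mpr ⟨a, hmem⟩
      omega
    refine ⟨1, fun _ => 1, fun _ => s, fun _ => one_pos, by simp, fun _ => hs0,
      fun _ => hPOVM0, ?_, fun a => by simp⟩
    intro l
    haveI : IsEmpty {a : Fin k // 0 < s a} := ⟨fun a => hz a.1 a.2⟩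
    exact linearIndependent_empty_type
  | succ N ih =>
    intro s hcard hs0 hPOVM0
    by_cases hind : LinearIndependent ℝ
        (fun a : {a : Fin k // 0 < s a} => (s a.1 : ℂ) • P a.1)
    · exact ⟨1, fun _ => 1, fun _ => s, fun _ => one_pos, by simp, fun _ => hs0,
        fun _ => hPOVM0, fun _ => hind, fun a => by simp⟩
    obtain ⟨g, hgsum, i₀, hgi₀⟩ := Fintype.not_linearIndependent_iff.mp hind
    set d : Fin k → ℝ := fun a => if h : 0 < s a then g ⟨a, h⟩ else 0 with hd
    have hdsub : ∀ (i : {a : Fin k // 0 < s a}), d i.1 = g i := by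
      intro i
      simp only [hd, dif_pos i.2]
    have hdep : ∑ a : Fin k, ((d a * s a : ℝ) : ℂ) • P a = 0 := by
      have e1 : ∑ a : Fin k, ((d a * s a : ℝ) : ℂ) • P a
          = ∑ a ∈ Finset.univ.filter (fun a => 0 < s a), ((d a * s a : ℝ) : ℂ) • P a := by
        refine (Finset.sum_subset (Finset.filter_subset _ _) ?_).symm
        intro a _ ha
        have hda : d a = 0 := by
          simp only [Finset.mem_filter, Finset.mem_univ, true_and] at ha
          simp [hd, dif_neg ha]
        simp [hda]
      have e2 : ∑ a ∈ Finset.univ.filter (fun a => 0 < s a), ((d a * s a : ℝ) : ℂ) • P a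
          = ∑ i : {a : Fin k // 0 < s a}, ((d i.1 * s i.1 : ℝ) : ℂ) • P i.1 :=
        Finset.sum_subtype _ (fun a => by simp) _
      rw [e1, e2, ← hgsum]
      refine Finset.sum_congr rfl fun i _ => ?_
      rw [mixed_smul, hdsub i]
    have htr : ∑ a, d a * s a = 0 := by
      have h := congrArg trace hdep
      rw [trace_sum, trace_zero] at h
      simp only [trace_smul, htrP, smul_eq_mul, mul_one] at h
      exact_mod_cast h
    have hne : d i₀.1 * s i₀.1 ≠ 0 := by
      have : d i₀.1 = g i₀ := hdsub i₀
      exact mul_ne_zero (this ▸ hgi₀) (ne_of_gt i₀.2)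
    have hpos : ∃ a, 0 < s a ∧ 0 < d a := by
      by_contra h
      push_neg at h
      have hle : ∀ a ∈ Finset.univ, d a * s a ≤ 0 := by
        intro a _
        by_cases hsa : 0 < s a
        · exact mul_nonpos_iff.mpr (Or.inr ⟨h a hsa, hs0 a⟩)
        · simp [hd, dif_neg hsa]
      have := (Finset.sum_eq_zero_iff_of_nonpos hle).mp htr i₀.1 (Finset.mem_univ _)
      exact hne this
    have hneg : ∃ a, 0 < s a ∧ d a < 0 := by
      by_contra h
      push_neg at h
      have hle : ∀ a ∈ Finset.univ, 0 ≤ d a * s a := by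
        intro a _
        by_cases hsa : 0 < s a
        · exact mul_nonneg (h a hsa) (hs0 a)
        · simp [hd, dif_neg hsa]
      have := (Finset.sum_eq_zero_iff_of_nonneg hle).mp htr i₀.1 (Finset.mem_univ _)
      exact hne this
    obtain ⟨ap, hsp, hdp⟩ := hpos
    obtain ⟨am, hsm, hdm⟩ := hneg
    obtain ⟨a₀, ha₀, hmin⟩ := Finset.exists_min_image
      (Finset.univ.filter (fun a => 0 < s a ∧ 0 < d a)) (fun a => 1 / d a)
      ⟨ap, by simp [hsp, hdp]⟩
    obtain ⟨a₁, ha₁, hmin'⟩ := Finset.exists_min_image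
      (Finset.univ.filter (fun a => 0 < s a ∧ d a < 0)) (fun a => 1 / (-d a))
      ⟨am, by simp [hsm, hdm]⟩
    simp only [Finset.mem_filter, Finset.mem_univ, true_and] at ha₀ ha₁
    set ε : ℝ := 1 / d a₀ with hε
    set ε' : ℝ := 1 / (-d a₁) with hε'
    have hεpos : 0 < ε := one_div_pos.mpr ha₀.2
    have hε'pos : 0 < ε' := one_div_pos.mpr (by linarith [ha₁.2])
    set t : Fin k → ℝ := fun a => s a * (1 - ε * d a) with ht
    set t' : Fin k → ℝ := fun a => s a * (1 + ε' * d a) with ht'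
    -- nonnegativity of t
    have htnn : ∀ a, 0 ≤ t a := by
      intro a
      by_cases hsa : 0 < s a
      · by_cases hda : 0 < d a
        · have hmem : a ∈ Finset.univ.filter (fun a => 0 < s a ∧ 0 < d a) := by
            simp [hsa, hda]
          have h1 : ε ≤ 1 / d a := hmin a hmem
          have h2 : ε * d a ≤ (1 / d a) * d a := mul_le_mul_of_nonneg_right h1 hda.le
          rw [one_div_mul_cancel (ne_of_gt hda)] at h2
          exact mul_nonneg hsa.le (by linarith)
        · push_neg at hda
          have : ε * d a ≤ 0 := mul_nonpos_iff.mpr (Or.inl ⟨hεpos.le, hda⟩)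
          exact mul_nonneg hsa.le (by linarith)
      · have : s a = 0 := le_antisymm (not_lt.mp hsa) (hs0 a)
        simp [ht, this]
    have ht'nn : ∀ a, 0 ≤ t' a := by
      intro a
      by_cases hsa : 0 < s a
      · by_cases hda : d a < 0
        · have hmem : a ∈ Finset.univ.filter (fun a => 0 < s a ∧ d a < 0) := by
            simp [hsa, hda]
          have h1 : ε' ≤ 1 / (-d a) := hmin' a hmem
          have h2 : ε' * (-d a) ≤ (1 / (-d a)) * (-d a) :=
            mul_le_mul_of_nonneg_right h1 (by linarith)
          rw [one_div_mul_cancel (by linarith : (-d a) ≠ 0)] at h2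
          exact mul_nonneg hsa.le (by nlinarith)
        · push_neg at hda
          have : 0 ≤ ε' * d a := mul_nonneg hε'pos.le hda
          exact mul_nonneg hsa.le (by linarith)
      · have : s a = 0 := le_antisymm (not_lt.mp hsa) (hs0 a)
        simp [ht', this]
    -- t kills a₀, t' kills a₁
    have hta₀ : t a₀ = 0 := by
      have : ε * d a₀ = 1 := one_div_mul_cancel (ne_of_gt ha₀.2)
      simp [ht, this]
    have ht'a₁ : t' a₁ = 0 := by
      have h1 : ε' * (-d a₁) = 1 := one_div_mul_cancel (by linarith [ha₁.2])
      have : ε' * d a₁ = -1 := by linarith [h1]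
      simp [ht', this]
    -- support shrinks
    have hsupp : ∀ (w : Fin k → ℝ) (b : Fin k), 0 < s b → w b = 0 →
        (∀ a, 0 < w a → 0 < s a) →
        (Finset.univ.filter fun a => 0 < w a).card ≤ N := by
      intro w b hsb hwb hws
      have hsub : (Finset.univ.filter fun a => 0 < w a) ⊆
          (Finset.univ.filter fun a => 0 < s a).erase b := by
        intro a ha
        simp only [Finset.mem_filter, Finset.mem_univ, true_and] at ha
        refine Finset.mem_erase.mpr ⟨?_, by simp [hws a ha]⟩
        rintro rfl
        rw [hwb] at ha
        exact lt_irrefl 0 ha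
      have h1 := Finset.card_le_card hsub
      have h2 : ((Finset.univ.filter fun a => 0 < s a).erase b).card
          = (Finset.univ.filter fun a => 0 < s a).card - 1 :=
        Finset.card_erase_of_mem (by simp [hsb])
      omega
    have htcard : (Finset.univ.filter fun a => 0 < t a).card ≤ N := by
      refine hsupp t a₀ ha₀.1 hta₀ ?_
      intro a ha
      by_contra hsa
      have : s a = 0 := le_antisymm (not_lt.mp hsa) (hs0 a)
      rw [ht] at ha
      simp [this] at ha
    have ht'card : (Finset.univ.filter fun a => 0 < t' a).card ≤ N := by
      refine hsupp t' a₁ ha₁.1 ht'a₁ ?_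
      intro a ha
      by_contra hsa
      have : s a = 0 := le_antisymm (not_lt.mp hsa) (hs0 a)
      rw [ht'] at ha
      simp [this] at ha
    -- POVM identities
    have htPOVM : ∑ a, (t a : ℂ) • P a = 1 := by
      have hterm : ∀ a, (t a : ℂ) • P a
          = (s a : ℂ) • P a - (ε : ℂ) • (((d a * s a : ℝ) : ℂ) • P a) := by
        intro a
        rw [smul_smul, ← sub_smul]
        congr 1
        rw [ht]
        push_cast
        ring
      rw [Finset.sum_congr rfl fun a _ => hterm a, Finset.sum_sub_distrib,
        ← Finset.smul_sum, hdep, smul_zero, sub_zero, hPOVM0]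
    have ht'POVM : ∑ a, (t' a : ℂ) • P a = 1 := by
      have hterm : ∀ a, (t' a : ℂ) • P a
          = (s a : ℂ) • P a + (ε' : ℂ) • (((d a * s a : ℝ) : ℂ) • P a) := by
        intro a
        rw [smul_smul, ← add_smul]
        congr 1
        rw [ht']
        push_cast
        ring
      rw [Finset.sum_congr rfl fun a _ => hterm a, Finset.sum_add_distrib,
        ← Finset.smul_sum, hdep, smul_zero, add_zero, hPOVM0]
    obtain ⟨L1, μ1, t1, hμ1pos, hμ1sum, ht1nn, ht1POVM, ht1ind, hrep1⟩ :=
      ih t htcard htnn htPOVM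
    obtain ⟨L2, μ2, t2, hμ2pos, hμ2sum, ht2nn, ht2POVM, ht2ind, hrep2⟩ :=
      ih t' ht'card ht'nn ht'POVM
    have hεsum : 0 < ε + ε' := by linarith
    set α : ℝ := ε' / (ε + ε') with hα
    set β : ℝ := ε / (ε + ε') with hβ
    have hαpos : 0 < α := div_pos hε'pos hεsum
    have hβpos : 0 < β := div_pos hεpos hεsum
    refine ⟨L1 + L2, Fin.append (fun i => α * μ1 i) (fun j => β * μ2 j),
      Fin.append t1 t2, ?_, ?_, ?_, ?_, ?_, ?_⟩
    · intro l
      refine Fin.addCases (fun i => ?_) (fun j => ?_) l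
      · simpa [Fin.append_left] using mul_pos hαpos (hμ1pos i)
      · simpa [Fin.append_right] using mul_pos hβpos (hμ2pos j)
    · rw [Fin.sum_univ_add]
      simp only [Fin.append_left, Fin.append_right]
      rw [← Finset.mul_sum, ← Finset.mul_sum, hμ1sum, hμ2sum, mul_one, mul_one,
        hα, hβ]
      field_simp
      ring
    · intro l
      refine Fin.addCases (fun i => ?_) (fun j => ?_) l
      · simpa [Fin.append_left] using ht1nn i
      · simpa [Fin.append_right] using ht2nn j
    · intro l
      refine Fin.addCases (fun i => ?_) (fun j => ?_) l
      · simpa [Fin.append_left] using ht1POVM i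
      · simpa [Fin.append_right] using ht2POVM j
    · intro l
      refine Fin.addCases (fun i => ?_) (fun j => ?_) l
      · have hEq : Fin.append t1 t2 (Fin.castAdd L2 i) = t1 i := Fin.append_left _ _ _
        rw [hEq]
        exact ht1ind i
      · have hEq : Fin.append t1 t2 (Fin.natAdd L1 j) = t2 j := Fin.append_right _ _ _
        rw [hEq]
        exact ht2ind j
    · intro a
      rw [Fin.sum_univ_add]
      simp only [Fin.append_left, Fin.append_right]
      have e1 : ∑ i, α * μ1 i * t1 i a = α * t a := by
        rw [hrep1 a, Finset.mul_sum]
        exact Finset.sum_congr rfl fun i _ => by ring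
      have e2 : ∑ j, β * μ2 j * t2 j a = β * t' a := by
        rw [hrep2 a, Finset.mul_sum]
        exact Finset.sum_congr rfl fun j _ => by ring
      rw [e1, e2, ht, ht', hα, hβ]
      field_simp
      ring
end
end

section
/- The effective POVM M_tb^e(ψ) = {((1+ψ_z)/2)P_{ẑ⊥}, (3/8)(1 − (2√2/3)ψ_x + (1/3)ψ_z)P_ẑ, (3/8)(1−ψ_z)P_α̂, (3/8)(1 + (2√2/3)ψ_x + (1/3)ψ_z)P_ẑ, (3/8)(1−ψ_z)P_{β̂⊥}}, obtained by partially evaluating the twisted-butterfly POVM on Alice's state with Bloch vector (ψ_x, ψ_y, ψ_z), decomposes as a convex combination μ₁M¹ + μ₂M² + μ₃M³ + μ₄M⁴ of the four extremal rank-1 POVMs M¹ = {P_{ẑ⊥}, P_ẑ, 0, 0, 0}, M² = {P_{ẑ⊥}, 0, 0, P_ẑ, 0}, M³ = {0, (1/2)P_ẑ, (3/4)P_α̂, 0, (3/4)P_{β̂⊥}}, M⁴ = {0, 0, (3/4)P_α̂, (1/2)P_ẑ, (3/4)P_{β̂⊥}}, with μ₁ = max{0, (1 − 2√2 ψ_x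 + 3ψ_z)/8}, μ₂ = (1+ψ_z)/2 − μ₁, μ₃ = (3/4)(1 − (2√2/3)ψ_x + (1/3)ψ_z) − 2μ₁, μ₄ = (3/4)(1 + (2√2/3)ψ_x + (1/3)ψ_z) − 2μ₂; moreover (μ₁, μ₂, μ₃, μ₄) is a probability distribution for every unit Bloch vector (ψ_x, ψ_y, ψ_z). -/
open Matrix
noncomputable section

def ket0 : Fin 2 → ℂ := ![1, 0]
def ket1 : Fin 2 → ℂ := ![0, 1]
def ketα : Fin 2 → ℂ := ![(Real.sqrt (1/3) : ℝ), (Real.sqrt (2/3) : ℝ)]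
def ketβperp : Fin 2 → ℂ := ![(Real.sqrt (1/3) : ℝ), -(Real.sqrt (2/3) : ℝ)]
def proj (v : Fin 2 → ℂ) : Matrix (Fin 2) (Fin 2) ℂ := vecMulVec v (star v)

/-- Effective POVM M_tb^e(ψ) on Bob's qubit, given Alice's Bloch vector (ψx, ψy, ψz). -/
def Meff (ψx ψz : ℝ) : Fin 5 → Matrix (Fin 2) (Fin 2) ℂ :=
  ![(((1 + ψz) / 2 : ℝ) : ℂ) • proj ket1,
    ((3/8 * (1 - (2 * Real.sqrt 2 / 3) * ψx + (1/3) * ψz) : ℝ) : ℂ) • proj ket0,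
    ((3/8 * (1 - ψz) : ℝ) : ℂ) • proj ketα,
    ((3/8 * (1 + (2 * Real.sqrt 2 / 3) * ψx + (1/3) * ψz) : ℝ) : ℂ) • proj ket0,
    ((3/8 * (1 - ψz) : ℝ) : ℂ) • proj ketβperp]

/-- The four extremal rank-1 POVMs M¹, M², M³, M⁴. -/
def Mext : Fin 4 → Fin 5 → Matrix (Fin 2) (Fin 2) ℂ :=
  ![![proj ket1, proj ket0, 0, 0, 0],
    ![proj ket1, 0, 0, proj ket0, 0],
    ![0, (1/2 : ℂ) • proj ket0, (3/4 : ℂ) • proj ketα, 0, (3/4 : ℂ) • proj ketβperp],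
    ![0, 0, (3/4 : ℂ) • proj ketα, (1/2 : ℂ) • proj ket0, (3/4 : ℂ) • proj ketβperp]]

/-- The mixing weights μ₁, μ₂, μ₃, μ₄ as functions of the Bloch vector. -/
def μmix (ψx ψz : ℝ) : Fin 4 → ℝ :=
  ![max 0 ((1 - 2 * Real.sqrt 2 * ψx + 3 * ψz) / 8),
    (1 + ψz) / 2 - max 0 ((1 - 2 * Real.sqrt 2 * ψx + 3 * ψz) / 8),
    3/4 * (1 - (2 * Real.sqrt 2 / 3) * ψx + (1/3) * ψz)
      - 2 * max 0 ((1 - 2 * Real.sqrt 2 * ψx + 3 * ψz) / 8),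
    3/4 * (1 + (2 * Real.sqrt 2 / 3) * ψx + (1/3) * ψz)
      - 2 * ((1 + ψz) / 2 - max 0 ((1 - 2 * Real.sqrt 2 * ψx + 3 * ψz) / 8))]

/-- the effective twisted-butterfly POVM decomposes as the convex
combination Σ_λ μ_λ M^λ of the four extremal rank-1 POVMs, and (μ₁,μ₂,μ₃,μ₄) is a
probability distribution for every unit Bloch vector. -/
theorem Meff_convex_decomposition (ψx ψy ψz : ℝ)
    (hunit : ψx ^ 2 + ψy ^ 2 + ψz ^ 2 = 1) :
    (∀ i : Fin 5, Meff ψx ψz i = ∑ l : Fin 4, ((μmix ψx ψz l : ℝ) : ℂ) • Mext l i) ∧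
    (∀ l : Fin 4, 0 ≤ μmix ψx ψz l) ∧ (∑ l : Fin 4, μmix ψx ψz l = 1) := by
  have hs2 : Real.sqrt 2 ^ 2 = 2 := Real.sq_sqrt (by norm_num)
  have hA : 0 ≤ 3 + (2 * Real.sqrt 2 * ψx + ψz) := by
    nlinarith [sq_nonneg (ψx - 2 * Real.sqrt 2 * ψz),
      sq_nonneg (2 * Real.sqrt 2 * ψx + ψz + 3), sq_nonneg ψy]
  have hB : 0 ≤ 3 + (-(2 * Real.sqrt 2 * ψx) + ψz) := by
    nlinarith [sq_nonneg (ψx + 2 * Real.sqrt 2 * ψz),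
      sq_nonneg (-(2 * Real.sqrt 2 * ψx) + ψz + 3), sq_nonneg ψy]
  have hz1 : -1 ≤ ψz := by nlinarith [sq_nonneg ψx, sq_nonneg ψy, sq_nonneg (ψz + 1)]
  have hz2 : ψz ≤ 1 := by nlinarith [sq_nonneg ψx, sq_nonneg ψy, sq_nonneg (ψz - 1)]
  refine ⟨?_, ?_, ?_⟩
  · intro i
    fin_cases i <;>
      · simp [Meff, Mext, μmix, Fin.sum_univ_four, Matrix.vecHead, Matrix.vecTail]
        match_scalars <;> simp only [Algebra.cast, Complex.coe_algebraMap] <;> (try push_cast) <;> ring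
  · intro l
    rcases le_or_gt ((1 - 2 * Real.sqrt 2 * ψx + 3 * ψz) / 8) 0 with h | h
    · have hm : max 0 ((1 - 2 * Real.sqrt 2 * ψx + 3 * ψz) / 8) = 0 := max_eq_left h
      fin_cases l <;> simp [μmix, hm] <;> linarith
    · have hm : max 0 ((1 - 2 * Real.sqrt 2 * ψx + 3 * ψz) / 8)
          = (1 - 2 * Real.sqrt 2 * ψx + 3 * ψz) / 8 := max_eq_right h.le
      fin_cases l <;> simp [μmix, hm] <;> linarith
  · simp only [μmix, Fin.sum_univ_four, Matrix.cons_val_zero, Matrix.cons_val_one,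
      Matrix.head_cons, Matrix.cons_val_two, Matrix.cons_val_three, Matrix.tail_cons,
      Fin.isValue]
    ring
end
end
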